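/- Let F be a field, A a finite-dimensional Frobenius F-algebra with trace tr_A : A → F and Nakayama automorphism ψ_A, and B ⊆ A a subalgebra that is itself a Frobenius algebra with trace tr_B and Nakayama automorphism ψ_B. Fix an F-basis 𝓑 of B with right dual basis {b^∨} (so tr_B(b₁ b₂^∨) = δ_{b₁,b₂}). Then the map tr : A → B, tr(a) = Σ_{b∈𝓑} tr_A(ψ_B(b)a) b^∨, is a (B,B)-bimodule homomorphism from the (ψ_B, ψ_A)-twisted bimodule structure on A to B, i.e., tr(ψ_B(b) a ψ_A(b')) = b tr(a) b' for all b, b' ∈ B, a ∈ A. -/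

import Mathlib

/-!
The `b^∨` are linearly independent, hence a basis of `B` by counting dimensions, and expanding in
it gives `y = Σ_b tr_B(b y) b^∨`. So an element of `B` is determined by the functional
`x ↦ tr_B(x y)`, and `tr(a)` is the element with `tr_B(x tr(a)) = tr_A(ψ_B(x) a)`. Writing
`b' = ψ_B(c)`, the Nakayama relation of `B` gives
`tr_B(x · b tr(a) b') = tr_B(c x b · tr(a)) = tr_A(b' ψ_B(x) ψ_B(b) a)`, and the Nakayama relation
of `A` moves `b'` to the right as `ψ_A(b')`: this is the functional defining the left-hand side.
-/

namespace Module.Basis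

variable {K B ι : Type*} [Field K] [Ring B] [Algebra K B] [Fintype ι] [DecidableEq ι]

def IsRightDual (bb : Basis ι K B) (tr : B →ₗ[K] K) (bv : ι → B) : Prop :=
  ∀ i j, tr (bb i * bv j) = if i = j then 1 else 0

namespace IsRightDual

variable {bb : Basis ι K B} {tr : B →ₗ[K] K} {bv : ι → B}

theorem trace_mul_eq_repr (hdual : bb.IsRightDual tr bv) (x : B) (j : ι) :
    tr (x * bv j) = bb.repr x j := by
  conv_lhs => rw [← bb.sum_repr x]
  simp only [Finset.sum_mul, map_sum, smul_mul_assoc, map_smul, hdual _ _]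
  simp

theorem linearIndependent (hdual : bb.IsRightDual tr bv) : LinearIndependent K bv := by
  rw [Fintype.linearIndependent_iff]
  intro c hc j
  simpa [Finset.mul_sum, hdual _ _] using congrArg (fun y => tr (bb j * y)) hc

theorem sum_trace_mul_smul (hdual : bb.IsRightDual tr bv) (y : B) :
    ∑ i, tr (bb i * y) • bv i = y := by
  have : FiniteDimensional K B := bb.finiteDimensional_of_finite
  have hspan : Submodule.span K (Set.range bv) = ⊤ :=
    hdual.linearIndependent.span_eq_top_of_card_eq_finrank' (finrank_eq_card_basis bb).symm
  let P : B →ₗ[K] B := ∑ i, (tr ∘ₗ LinearMap.mulLeft K (bb i)).smulRight (bv i)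
  have hP : P = LinearMap.id := LinearMap.ext_on_range hspan fun j => by simp [P, hdual _ _]
  simpa [P] using LinearMap.congr_fun hP y

theorem eq_sum_smul_of_trace_mul (hdual : bb.IsRightDual tr bv) {y : B} {f : B → K}
    (hf : ∀ x, tr (x * y) = f x) : y = ∑ i, f (bb i) • bv i := by
  simp only [← hf, hdual.sum_trace_mul_smul]

theorem trace_mul_sum_smul (hdual : bb.IsRightDual tr bv) (g : B →ₗ[K] K) (x : B) :
    tr (x * ∑ i, g (bb i) • bv i) = g x := by
  conv_rhs => rw [← bb.sum_repr x]
  simp only [Finset.mul_sum, mul_smul_comm, map_sum, map_smul, hdual.trace_mul_eq_repr,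
    smul_eq_mul, mul_comm]

end IsRightDual

end Module.Basis

theorem twisted_trace_is_bimodule_map
    {F : Type u} [Field F] {A : Type v} [Ring A] [Algebra F A]
    (trA : A →ₗ[F] F)
    (ψA : A ≃ₐ[F] A)
    (hψA : ∀ a₁ a₂ : A, trA (a₁ * a₂) = trA (a₂ * ψA a₁))
    (B : Subalgebra F A)
    (trB : B →ₗ[F] F)
    (ψB : B ≃ₐ[F] B)
    (hψB : ∀ b₁ b₂ : B, trB (b₁ * b₂) = trB (b₂ * ψB b₁))
    {ι : Type w} [Fintype ι] [DecidableEq ι] (bb : Module.Basis ι F B) (bv : ι → B)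
    (hdual : ∀ i j : ι, trB (bb i * bv j) = if i = j then 1 else 0) :
    ∀ (b b' : B) (a : A),
      (∑ i, trA ((ψB (bb i) : A) * ((ψB b : A) * a * ψA (b' : A))) • bv i) =
        b * (∑ i, trA ((ψB (bb i) : A) * a) • bv i) * b' := by
  intro b b' a
  have hdual : bb.IsRightDual trB bv := hdual
  obtain ⟨c, rfl⟩ := ψB.surjective b'
  let g : B →ₗ[F] F := trA ∘ₗ LinearMap.mulRight F a ∘ₗ B.val.toLinearMap ∘ₗ ψB.toLinearMap
  change _ = b * (∑ i, g (bb i) • bv i) * ψB c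
  refine (hdual.eq_sum_smul_of_trace_mul
    (f := fun z => trA ((ψB z : A) * ((ψB b : A) * a * ψA (ψB c : A)))) fun x => ?_).symm
  calc trB (x * (b * (∑ i, g (bb i) • bv i) * ψB c))
      = trB ((c * x * b) * ∑ i, g (bb i) • bv i) := by
        rw [mul_assoc (c * x), mul_assoc c, hψB c]; simp only [mul_assoc]
    _ = trA (ψB (c * x * b) * a) := hdual.trace_mul_sum_smul g _
    _ = trA ((ψB c : A) * ((ψB x : A) * ((ψB b : A) * a))) := by simp [mul_assoc]
    _ = trA ((ψB x : A) * ((ψB b : A) * a * ψA (ψB c : A))) := by rw [hψA]; simp only [mul_assoc]
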